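/- Let (X,d) be a compact metric space without isolated points and T: X → X a continuous map such that the space of T-invariant Borel probability measures is the closed convex hull of the ergodic measures supported on periodic orbits of T. Then the set of periodic points of T is dense in the measure center M(X,T). -/

import Mathlib

open Filter Topology MeasureTheory Metric Set TopologicalSpace

section Defs

variable {X : Type*} [TopologicalSpace X]

/-- The `n`-th Birkhoff average of `φ` along the orbit of `x` under `T`. -/
noncomputable def birkhoffAvg (T : X → X) (φ : X → ℝ) (x : X) (n : ℕ) : ℝ :=
  (∑ j ∈ Finset.range n, φ (T^[j] x)) / n

/-- The set of `(T,φ)`-irregular points. -/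
def irregularSet (T : X → X) (φ : X → ℝ) : Set X :=
  {x | ¬ ∃ l : ℝ, Tendsto (fun n => birkhoffAvg T φ x n) atTop (𝓝 l)}

/-- The set of completely irregular points of `T`. -/
def completelyIrregular (T : X → X) : Set X :=
  {x | ∀ φ : X → ℝ, Continuous φ → (irregularSet T φ).Nonempty → x ∈ irregularSet T φ}

/-- The omega-limit set of `x` under `T`. -/
def omegaLimitSet (T : X → X) (x : X) : Set X :=
  ⋂ N : ℕ, closure ((fun n => T^[n] x) '' Set.Ici N)

/-- The closure of the forward orbit of `x` under `T`. -/
def orbitClosure (T : X → X) (x : X) : Set X :=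
  closure (Set.range fun n : ℕ => T^[n] x)

/-- Topological transitivity. -/
def TopTransitive (T : X → X) : Prop :=
  ∀ U V : Set X, IsOpen U → IsOpen V → U.Nonempty → V.Nonempty →
    ∃ n : ℕ, (U ∩ T^[n] ⁻¹' V).Nonempty

/-- The set of non-wandering points of `T`. -/
def nonWandering (T : X → X) : Set X :=
  {z | ∀ U : Set X, IsOpen U → z ∈ U → ∃ N : ℕ, 1 ≤ N ∧ (T^[N] '' U ∩ U).Nonempty}

/-- The space `X` has no isolated points. -/
def NoIsolatedPoints (X : Type*) [TopologicalSpace X] : Prop :=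
  ∀ x : X, (𝓝[≠] x).NeBot

end Defs

/-- The shadowing property. -/
def ShadowingProperty {X : Type*} [MetricSpace X] (T : X → X) : Prop :=
  ∀ ε > 0, ∃ δ > 0, ∀ u : ℕ → X, (∀ n, dist (T (u n)) (u (n + 1)) < δ) →
    ∃ y : X, ∀ n, dist (T^[n] y) (u n) < ε

section MeasureDefs

variable {X : Type*} [TopologicalSpace X] [MeasurableSpace X]

/-- `μ` is a `T`-invariant Borel probability measure. -/
def InvariantProb (T : X → X) (μ : ProbabilityMeasure X) : Prop :=
  (μ : Measure X).map T = (μ : Measure X)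

/-- The (topological) support of a probability measure. -/
def msupp (μ : ProbabilityMeasure X) : Set X :=
  {x | ∀ U : Set X, x ∈ U → IsOpen U → 0 < (μ : Measure X) U}

/-- `μ ∈ V_T(x)`: `μ` is a weak* accumulation point of the empirical measures
along the orbit of `x`, characterized through convergence of Birkhoff averages of
every continuous function along a subsequence. -/
def memVT (T : X → X) (x : X) (μ : ProbabilityMeasure X) : Prop :=
  ∃ n : ℕ → ℕ, StrictMono n ∧ ∀ φ : X → ℝ, Continuous φ →
    Tendsto (fun k => birkhoffAvg T φ x (n k)) atTop (𝓝 (∫ y, φ y ∂(μ : Measure X)))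

/-- The measure center of `T`. -/
def measureCenter (T : X → X) : Set X :=
  closure (⋃ μ ∈ {μ : ProbabilityMeasure X | InvariantProb T μ}, msupp μ)

/-- The basin of attraction of an invariant probability measure. -/
def basin (T : X → X) (η : ProbabilityMeasure X) : Set X :=
  {x | ∀ ψ : X → ℝ, Continuous ψ →
    Tendsto (fun n => birkhoffAvg T ψ x n) atTop (𝓝 (∫ y, ψ y ∂(η : Measure X)))}

end MeasureDefs


/-- `η` is the ergodic measure uniformly distributed on a periodic orbit of `T`. -/
def IsPeriodicOrbitMeasure {X : Type*} [TopologicalSpace X] [MeasurableSpace X]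
    (T : X → X) (η : ProbabilityMeasure X) : Prop :=
  ∃ (p : X) (k : ℕ), 0 < k ∧ T^[k] p = p ∧
    (η : Measure X) = (k : ENNReal)⁻¹ • ∑ j ∈ Finset.range k, MeasureTheory.Measure.dirac (T^[j] p)

theorem stmt12 {X : Type*} [MetricSpace X] [CompactSpace X] [MeasurableSpace X] [BorelSpace X]
    (hX : NoIsolatedPoints X) {T : X → X} (hT : Continuous T)
    (hhull : ∀ μ : ProbabilityMeasure X, InvariantProb T μ →
      ∃ ν : ℕ → ProbabilityMeasure X, Tendsto ν atTop (𝓝 μ) ∧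
        ∀ n : ℕ, ∃ (k : ℕ) (w : Fin k → NNReal) (m : Fin k → ProbabilityMeasure X),
          (∑ i, w i = 1) ∧ (∀ i, IsPeriodicOrbitMeasure T (m i)) ∧
          ((ν n : Measure X) = ∑ i, (w i : ENNReal) • (m i : Measure X))) :
    measureCenter T ⊆ closure {x : X | ∃ k : ℕ, 0 < k ∧ T^[k] x = x} := by
  apply closure_minimal _ isClosed_closure
  rintro x hx
  simp only [Set.mem_iUnion] at hx
  obtain ⟨μ, hμinv, hxsupp⟩ := hx
  rw [_root_.mem_closure_iff]
  intro U hU hxU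
  rw [Set.inter_comm]
  have hμU : 0 < (μ : Measure X) U := hxsupp U hxU hU
  obtain ⟨ν, hν, hνdec⟩ := hhull μ hμinv
  have hlim := MeasureTheory.ProbabilityMeasure.le_liminf_measure_open_of_tendsto hν hU
  have : ∃ n, 0 < (ν n : Measure X) U := by
    by_contra h
    push_neg at h
    simp only [nonpos_iff_eq_zero] at h
    have : Filter.liminf (fun i => (ν i : Measure X) U) atTop = 0 := by
      simp [h]
    rw [this] at hlim
    exact absurd (le_antisymm hlim (zero_le)) (ne_of_gt hμU)
  obtain ⟨n, hn⟩ := this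
  obtain ⟨k, w, m, hw, hper, hdec⟩ := hνdec n
  rw [hdec] at hn
  have : ∃ i, 0 < (m i : Measure X) U := by
    by_contra h
    push_neg at h
    simp only [nonpos_iff_eq_zero] at h
    simp [Measure.coe_finset_sum, Finset.sum_apply, h] at hn
  obtain ⟨i, hi⟩ := this
  obtain ⟨p, K, hK, hTK, hmeas⟩ := hper i
  rw [hmeas] at hi
  have : ∃ j ∈ Finset.range K, 0 < Measure.dirac (T^[j] p) U := by
    by_contra h
    push_neg at h
    simp only [nonpos_iff_eq_zero] at h
    have : (∑ j ∈ Finset.range K, Measure.dirac (T^[j] p)) U = 0 := by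
      rw [Measure.coe_finset_sum, Finset.sum_apply]
      exact Finset.sum_eq_zero h
    simp [Measure.smul_apply, this] at hi
  obtain ⟨j, hjK, hj⟩ := this
  have hmem : T^[j] p ∈ U := by
    by_contra hmem
    rw [Measure.dirac_apply' _ hU.measurableSet] at hj
    simp [Set.indicator_of_notMem hmem] at hj
  exact ⟨T^[j] p, ⟨K, hK, by
    rw [← Function.iterate_add_apply, Nat.add_comm, Function.iterate_add_apply, hTK]⟩, hmem⟩
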